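/- Let n ≥ 2, p ≥ 0, c ∈ ℝ, and let (f,Γ) satisfy conditions (C) and (F) with λ* := (1,−1,…,−1) ∉ closure(Γ). If either eₙ := (0,…,0,1) ∈ ∂Γ or c ≤ 0, then there exists no v ∈ C²(closure(ℝⁿ₊)) depending only on the variable xₙ that satisfies f(λ(A[v])) = e^(−p·v) on closure(ℝⁿ₊) and ∂v/∂xₙ = c·e^v on ∂ℝⁿ₊. -/

import Mathlib

noncomputable section

open Filter Metric Polynomial MeasureTheory
open scoped Topology

namespace CLL

abbrev E (d : ℕ) := EuclideanSpace ℝ (Fin d)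

/-- One-sided partial derivative (within a set `s`) in the `i`-th coordinate direction. -/
def pd (d : ℕ) (s : Set (E d)) (v : E d → ℝ) (i : Fin d) (x : E d) : ℝ :=
  fderivWithin ℝ v s x (EuclideanSpace.single i 1)

/-- The Möbius Hessian `A[v] = e^{-2v} (-∇² v + ∇v ⊗ ∇v - |∇v|²/2 · I)`,
computed with derivatives within `s`. -/
def mHess (d : ℕ) (s : Set (E d)) (v : E d → ℝ) (x : E d) : Matrix (Fin d) (Fin d) ℝ :=
  fun i j =>
    Real.exp (-2 * v x) *
      (-(pd d s (fun y => pd d s v j y) i x)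
        + pd d s v i x * pd d s v j x
        - (1 / 2) * (∑ k, (pd d s v k x) ^ 2) * (if i = j then (1 : ℝ) else 0))

/-- `μ` lists the eigenvalues (with multiplicity, in some order) of the matrix `M`. -/
def IsEigList (d : ℕ) (M : Matrix (Fin d) (Fin d) ℝ) (μ : Fin d → ℝ) : Prop :=
  M.charpoly = ∏ i, (X - C (μ i))

/-- `λ* = (1, -1, …, -1)`. -/
def lamStar (d : ℕ) : Fin d → ℝ := fun i => if (i : ℕ) = 0 then 1 else -1

/-- Condition (C): `Γ ⊊ ℝⁿ` is a nonempty open symmetric cone with vertex at the origin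
satisfying `Γ + Γₙ ⊆ Γ`. -/
def CondC (d : ℕ) (Γ : Set (Fin d → ℝ)) : Prop :=
  Γ.Nonempty ∧ Γ ≠ Set.univ ∧ IsOpen Γ ∧
    (∀ t : ℝ, 0 < t → ∀ lam ∈ Γ, t • lam ∈ Γ) ∧
    (∀ σ : Equiv.Perm (Fin d), ∀ lam ∈ Γ, lam ∘ σ ∈ Γ) ∧
    (∀ lam ∈ Γ, ∀ μ : Fin d → ℝ, (∀ i, 0 < μ i) → lam + μ ∈ Γ)

/-- Condition (F): `f` is symmetric on `Γ`, locally Lipschitz, and for each compact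
`K ⊆ Γ` its partial derivatives are bounded below a.e. on `K` by a positive constant. -/
def CondF (d : ℕ) (Γ : Set (Fin d → ℝ)) (f : (Fin d → ℝ) → ℝ) : Prop :=
  (∀ σ : Equiv.Perm (Fin d), ∀ lam ∈ Γ, f (lam ∘ σ) = f lam) ∧
  (∀ lam ∈ Γ, ∃ K : NNReal, ∃ t ∈ nhdsWithin lam Γ, LipschitzOnWith K f t) ∧
  (∀ K : Set (Fin d → ℝ), K ⊆ Γ → IsCompact K →
    ∃ c > (0 : ℝ), ∀ᵐ lam ∂(volume.restrict K),
      ∀ i : Fin d, c ≤ lineDeriv ℝ f lam (Pi.single i 1))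

/-- The index of the last coordinate. -/
def lastIdx (n : ℕ) : Fin (n + 2) := Fin.last (n + 1)

/-- The open upper half space `ℝⁿ₊`. -/
def upperH (n : ℕ) : Set (E (n + 2)) := {x | 0 < x (lastIdx n)}

/-- The standard bubble `log (a / (1 + b |x - x̄|²))`. -/
def bubble (n : ℕ) (a b : ℝ) (xbar : E (n + 2)) (x : E (n + 2)) : ℝ :=
  Real.log (a / (1 + b * ‖x - xbar‖ ^ 2))

/-- The open upper half ball `B_r⁺`. -/
def Bplus (n : ℕ) (r : ℝ) : Set (E (n + 2)) := Metric.ball 0 r ∩ upperH n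

/-- The set defining `μ_Γ⁻`. -/
def muSet (d : ℕ) (Γ : Set (Fin d → ℝ)) : Set ℝ :=
  {c : ℝ | (fun i : Fin d => if (i : ℕ) = 0 then c else -1) ∈ closure Γ}

/-- `μ_Γ⁻ = inf { c : (c,-1,…,-1) ∈ closure Γ }`. -/
def muMinus (d : ℕ) (Γ : Set (Fin d → ℝ)) : ℝ :=
  sInf (muSet d Γ)

end CLL

open CLL

/-!
If `v` depends only on `xₙ`, then with `u = ∂ₙv` the Möbius Hessian is the diagonal matrix
`e^{-2v} diag(-u²/2, …, -u²/2, -∂ₙu + u²/2)`, so this vector lies in `Γ`. An open cone with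
`Γ + Γₙ ⊆ Γ` contains no vector with all entries `≤ 0`; hence the last entry is positive, and
then `eₙ ∈ Γ`, which rules out `eₙ ∈ ∂Γ`. Since `λ* ∉ closure Γ`, there is `m > 1` with
`μ ≥ m` whenever `(μ, -1, …, -1) ∈ Γ`; this turns the diagonal into the Riccati inequality
`∂ₙu ≤ -((m - 1)/2) u²` (and `∂ₙu < 0`) along the `xₙ`-axis. As `u(0) = c e^{v(0)} ≤ 0`, `u`
becomes negative, after which `1/u` increases at rate at least `(m - 1)/2` and would have to
change sign.
-/

open Set Function

theorem IsOpen.exists_pos_apply_mem {X : Type*} [TopologicalSpace X] {U : Set X} (hU : IsOpen U)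
    {F : ℝ → X} (hF : ContinuousAt F 0) (h0 : F 0 ∈ U) : ∃ t > 0, F t ∈ U := by
  have hev : ∀ᶠ t in 𝓝[>] (0 : ℝ), F t ∈ U :=
    nhdsWithin_le_nhds (hF.preimage_mem_nhds (hU.mem_nhds h0))
  obtain ⟨t, htU, ht⟩ := (hev.and self_mem_nhdsWithin).exists
  exact ⟨t, ht, htU⟩

theorem exists_perm_eq_comp_of_map_univ_eq {ι α : Type*} [Fintype ι] {f g : ι → α}
    (h : Multiset.map f Finset.univ.val = Multiset.map g Finset.univ.val) :
    ∃ σ : Equiv.Perm ι, f = g ∘ σ := by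
  classical
  have hcard : ∀ a, Fintype.card {i // f i = a} = Fintype.card {i // g i = a} := by
    intro a
    simpa [Multiset.count_map, Fintype.card_subtype, Finset.card_def, Finset.filter_val,
      eq_comm] using congrArg (Multiset.count a) h
  exact ⟨Equiv.ofFiberEquiv fun a => Fintype.equivOfCardEq (hcard a),
    funext fun i => (Equiv.ofFiberEquiv_map _ i).symm⟩

theorem Polynomial.roots_prod_univ_X_sub_C {ι R : Type*} [Fintype ι] [CommRing R] [IsDomain R]
    (g : ι → R) : (∏ i, (X - C (g i))).roots = Multiset.map g Finset.univ.val := by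
  rw [← roots_multiset_prod_X_sub_C (Multiset.map g Finset.univ.val), Multiset.map_map]
  rfl

theorem fderivWithin_eq_comp_of_eqOn_comp {𝕜 F G : Type*} [NontriviallyNormedField 𝕜]
    [NormedAddCommGroup F] [NormedSpace 𝕜 F] [NormedAddCommGroup G] [NormedSpace 𝕜 G]
    {s : Set F} {w : F → G} {L : F →L[𝕜] F} (hs : UniqueDiffOn 𝕜 s) (hLs : MapsTo L s s)
    (hw : DifferentiableOn 𝕜 w s) (hwL : EqOn w (w ∘ L) s) {x : F} (hx : x ∈ s) :
    fderivWithin 𝕜 w s x = (fderivWithin 𝕜 w s (L x)).comp L := by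
  rw [fderivWithin_congr hwL (hwL hx)]
  exact ((hw _ (hLs hx)).hasFDerivWithinAt.comp x L.hasFDerivWithinAt hLs).fderivWithin (hs x hx)

theorem false_of_riccati_on_Ici {U Q : ℝ → ℝ} {k : ℝ} (hk : 0 < k)
    (hU : ∀ t ∈ Ici (0 : ℝ), HasDerivWithinAt U (Q t) (Ici 0) t) (hU0 : U 0 ≤ 0)
    (hQneg : ∀ t ≥ 0, Q t < 0) (hQ : ∀ t ≥ 0, Q t ≤ -k * U t ^ 2) : False := by
  have hderiv : ∀ t > 0, HasDerivAt U (Q t) t := fun t ht =>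
    (hU t ht.le).hasDerivAt (Ici_mem_nhds ht)
  have hanti : StrictAntiOn U (Ici 0) :=
    strictAntiOn_of_hasDerivWithinAt_neg (convex_Ici 0)
      (fun t ht => (hU t ht).continuousWithinAt)
      (fun t ht => (hderiv t (by simpa using ht)).hasDerivWithinAt)
      (fun t ht => hQneg t (by rw [interior_Ici] at ht; exact le_of_lt ht))
  have hneg : ∀ t > 0, U t < 0 := fun t ht =>
    (hanti self_mem_Ici (mem_Ici.2 ht.le) ht).trans_le hU0
  -- `1 / U` grows at least at rate `k`, so it cannot stay negative.
  have hg : ∀ t > 0, HasDerivAt (fun t => (U t)⁻¹ - k * t) (-Q t / U t ^ 2 - k) t :=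
    fun t ht => by
      simpa using ((hderiv t ht).inv (hneg t ht).ne).fun_sub ((hasDerivAt_id' t).const_mul k)
  have hmono : MonotoneOn (fun t => (U t)⁻¹ - k * t) (Ici 1) := by
    refine monotoneOn_of_hasDerivWithinAt_nonneg (convex_Ici 1)
      (fun t ht => (hg t (zero_lt_one.trans_le ht)).continuousAt.continuousWithinAt)
      (fun t ht => (hg t ?_).hasDerivWithinAt) (fun t ht => ?_) <;>
      rw [interior_Ici] at ht
    · exact zero_lt_one.trans ht
    · have ht0 : 0 < t := zero_lt_one.trans ht
      rw [sub_nonneg, le_div_iff₀ (by nlinarith [hneg t ht0])]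
      linarith [hQ t ht0.le]
  set T := 1 - (U 1)⁻¹ / k
  have hU1 : (U 1)⁻¹ < 0 := inv_lt_zero.2 (hneg 1 one_pos)
  have h1T : 1 ≤ T := by
    have : 0 < -(U 1)⁻¹ / k := div_pos (by linarith) hk
    simp only [T]; rw [sub_eq_add_neg, ← neg_div]; linarith
  have hT := hmono self_mem_Ici h1T h1T
  have hUT : (U T)⁻¹ < 0 := inv_lt_zero.2 (hneg T (by linarith))
  have : k * T = k - (U 1)⁻¹ := by simp only [T]; field_simp
  simp only at hT
  linarith

namespace CLL

section Cone

variable {d : ℕ} {Γ : Set (Fin d → ℝ)}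

theorem CondC.add_nonneg_mem (hC : CondC d Γ) {lam μ : Fin d → ℝ} (hlam : lam ∈ Γ)
    (hμ : ∀ i, 0 ≤ μ i) : lam + μ ∈ Γ := by
  obtain ⟨-, -, hopen, -, -, hadd⟩ := hC
  obtain ⟨ε, hε, hεΓ⟩ := hopen.exists_pos_apply_mem (F := fun ε : ℝ => lam - ε • 1)
    (by fun_prop) (by simpa using hlam)
  convert hadd _ hεΓ (μ + ε • 1) (fun i => by
      simp only [Pi.add_apply, Pi.smul_apply, Pi.one_apply, smul_eq_mul, mul_one]; linarith [hμ i])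
    using 1
  abel

theorem CondC.zero_notMem (hC : CondC d Γ) : (0 : Fin d → ℝ) ∉ Γ := by
  obtain ⟨-, hne, hopen, hcone, -, -⟩ := hC
  intro h0
  refine hne (eq_univ_of_forall fun z => ?_)
  obtain ⟨t, ht, htΓ⟩ := hopen.exists_pos_apply_mem (F := fun t : ℝ => t • z)
    (by fun_prop) (by simpa using h0)
  simpa [smul_smul, inv_mul_cancel₀ ht.ne'] using hcone t⁻¹ (inv_pos.2 ht) _ htΓ

theorem CondC.exists_pos_of_mem (hC : CondC d Γ) {lam : Fin d → ℝ} (hlam : lam ∈ Γ) :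
    ∃ i, 0 < lam i := by
  by_contra! hle
  have h0 := hC.add_nonneg_mem hlam (μ := -lam) fun i => by simpa using hle i
  exact hC.zero_notMem (by simpa using h0)

theorem CondC.exists_one_lt_le_of_mem (hC : CondC d Γ) (hstar : lamStar d ∉ closure Γ) :
    ∃ m > 1, ∀ c : ℝ, (fun i : Fin d => if (i : ℕ) = 0 then c else -1) ∈ Γ → m ≤ c := by
  set vec : ℝ → Fin d → ℝ := fun c i => if (i : ℕ) = 0 then c else -1
  have hcont : Continuous vec := continuous_pi fun i => by
    by_cases hi : (i : ℕ) = 0 <;> simp [vec, hi, continuous_id', continuous_const]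
  obtain ⟨ε, hε, hball⟩ := Metric.mem_nhds_iff.1 <|
    hcont.continuousAt.preimage_mem_nhds (isClosed_closure.isOpen_compl.mem_nhds hstar)
  refine ⟨1 + ε / 2, by linarith, fun c hc => ?_⟩
  by_contra! hlt
  have hmem : vec (1 + ε / 2) ∈ Γ := by
    convert hC.add_nonneg_mem hc (μ := fun i => if (i : ℕ) = 0 then 1 + ε / 2 - c else 0)
      (fun i => by split_ifs <;> linarith) using 1
    funext i
    by_cases hi : (i : ℕ) = 0 <;> simp [vec, hi]
  refine hball ?_ (subset_closure hmem)
  rw [Metric.mem_ball, Real.dist_eq, abs_of_pos (by linarith)]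
  linarith

variable {l : Fin d} {a b : ℝ}

theorem CondC.pos_of_update_mem (hC : CondC d Γ) (hb : 0 ≤ b)
    (h : update (fun _ => -b) l a ∈ Γ) : 0 < a := by
  obtain ⟨i, hi⟩ := hC.exists_pos_of_mem h
  by_cases hil : i = l
  · simpa [hil] using hi
  · rw [update_of_ne hil] at hi
    linarith

theorem CondC.single_mem_of_update_mem (hC : CondC d Γ) (hb : 0 ≤ b)
    (h : update (fun _ => -b) l a ∈ Γ) : Pi.single l 1 ∈ Γ := by
  have ha := hC.pos_of_update_mem hb h
  convert hC.add_nonneg_mem (hC.2.2.2.1 a⁻¹ (inv_pos.2 ha) _ h)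
    (μ := update (fun _ => b / a) l 0) (fun i => by
      by_cases hil : i = l <;> simp [hil]; positivity) using 1
  funext i
  by_cases hil : i = l
  · subst hil; simp [ha.ne']
  · simp only [Pi.single_eq_of_ne hil, Pi.add_apply, Pi.smul_apply, update_of_ne hil,
      smul_eq_mul]
    ring

theorem CondC.mul_le_of_update_mem (hC : CondC d Γ) {m : ℝ}
    (hm : ∀ c : ℝ, (fun i : Fin d => if (i : ℕ) = 0 then c else -1) ∈ Γ → m ≤ c)
    (hb : 0 < b) (h : update (fun _ => -b) l a ∈ Γ) : m * b ≤ a := by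
  have : NeZero d := NeZero.of_pos l.pos
  obtain ⟨-, -, -, hcone, hsym, -⟩ := hC
  rw [← le_div_iff₀ hb]
  refine hm _ ?_
  convert hcone b⁻¹ (inv_pos.2 hb) _ (hsym (Equiv.swap 0 l) _ h) using 1
  funext i
  by_cases hi : i = 0
  · subst hi; simp [div_eq_inv_mul]
  · have : Equiv.swap 0 l i ≠ l := by
      rw [Ne, Equiv.swap_apply_eq_iff, Equiv.swap_apply_right]; exact hi
    simp [Fin.val_eq_zero_iff, hi, this, hb.ne']

theorem CondC.mem_of_isEigList_diagonal (hC : CondC d Γ) {g ev : Fin d → ℝ}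
    (h : IsEigList d (Matrix.diagonal g) ev) (hev : ev ∈ Γ) : g ∈ Γ := by
  have hroots := congrArg roots h
  rw [Matrix.charpoly_diagonal, roots_prod_univ_X_sub_C, roots_prod_univ_X_sub_C] at hroots
  obtain ⟨σ, rfl⟩ := exists_perm_eq_comp_of_map_univ_eq hroots
  exact hC.2.2.2.2.1 σ ev hev

theorem CondC.neg_and_le_of_update_mem (hC : CondC d Γ) {m : ℝ} (hm1 : 1 < m)
    (hm : ∀ c : ℝ, (fun i : Fin d => if (i : ℕ) = 0 then c else -1) ∈ Γ → m ≤ c)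
    {s u P : ℝ} (h : update (fun _ => -(Real.exp s * u ^ 2 / 2)) l
      (Real.exp s * (-P + u ^ 2 / 2)) ∈ Γ) :
    P < 0 ∧ P ≤ -((m - 1) / 2) * u ^ 2 := by
  have hE := Real.exp_pos s
  have ha := hC.pos_of_update_mem (by positivity) h
  rcases eq_or_ne u 0 with rfl | hu
  · have hP : P < 0 := neg_of_mul_neg_right (by simpa using ha) hE.le
    exact ⟨hP, by simpa using hP.le⟩
  · have hmb := hC.mul_le_of_update_mem hm (by positivity) h
    have : (m - 1) / 2 * u ^ 2 ≤ -P := by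
      have := le_of_mul_le_mul_left (a := Real.exp s) (by linarith) hE
      nlinarith
    constructor <;> nlinarith [sq_pos_of_ne_zero hu]

end Cone

section HalfSpace

variable {d : ℕ} (l : Fin d)

def closedHalfSpace : Set (E d) := {x | 0 ≤ x l}

theorem closure_upperH (n : ℕ) : closure (upperH n) = closedHalfSpace (lastIdx n) := by
  have hπ : IsOpenMap (EuclideanSpace.proj (lastIdx n) : E (n + 2) →L[ℝ] ℝ) :=
    (EuclideanSpace.proj (lastIdx n) : E (n + 2) →L[ℝ] ℝ).isOpenMap fun t =>
      ⟨EuclideanSpace.single (lastIdx n) t, by simp⟩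
  have := hπ.preimage_closure_eq_closure_preimage (EuclideanSpace.proj _).continuous (Ioi 0)
  rw [closure_Ioi] at this
  exact this.symm

def axisProj : E d →L[ℝ] E d :=
  (EuclideanSpace.proj l).smulRight (EuclideanSpace.single l 1)

variable {l}

theorem axisProj_apply (x : E d) : axisProj l x = EuclideanSpace.single l (x l) := by
  ext j
  by_cases hj : j = l <;> simp [axisProj, hj]

theorem axisProj_single {i : Fin d} (hi : i ≠ l) :
    axisProj l (EuclideanSpace.single i 1) = 0 := by
  simp [axisProj_apply, Ne.symm hi]

theorem mapsTo_axisProj : MapsTo (axisProj l) (closedHalfSpace l) (closedHalfSpace l) :=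
  fun x hx => by simpa [closedHalfSpace, axisProj_apply] using hx

theorem uniqueDiffOn_closedHalfSpace : UniqueDiffOn ℝ (closedHalfSpace l) := by
  refine uniqueDiffOn_convex ?_ ⟨EuclideanSpace.single l 1, ?_⟩
  · exact convex_halfSpace_ge (EuclideanSpace.proj l).isLinear 0
  · have hopen : IsOpen {x : E d | 0 < x l} :=
      isOpen_lt continuous_const (EuclideanSpace.proj l).continuous
    have hsub : {x : E d | 0 < x l} ⊆ closedHalfSpace l := fun x hx => le_of_lt (α := ℝ) hx
    exact interior_maximal hsub hopen (by simp)

variable {w : E d → ℝ}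

theorem pd_eq_zero_of_eqOn_comp_axisProj (hw : DifferentiableOn ℝ w (closedHalfSpace l))
    (hwL : EqOn w (w ∘ axisProj l) (closedHalfSpace l)) {x : E d} (hx : x ∈ closedHalfSpace l)
    {i : Fin d} (hi : i ≠ l) : pd d (closedHalfSpace l) w i x = 0 := by
  rw [pd, fderivWithin_eq_comp_of_eqOn_comp uniqueDiffOn_closedHalfSpace mapsTo_axisProj hw hwL hx,
    ContinuousLinearMap.comp_apply, axisProj_single hi, map_zero]

theorem eqOn_pd_comp_axisProj (hw : DifferentiableOn ℝ w (closedHalfSpace l))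
    (hwL : EqOn w (w ∘ axisProj l) (closedHalfSpace l)) :
    EqOn (pd d (closedHalfSpace l) w l) (pd d (closedHalfSpace l) w l ∘ axisProj l)
      (closedHalfSpace l) := fun x hx => by
  simp only [pd, comp_apply,
    fderivWithin_eq_comp_of_eqOn_comp uniqueDiffOn_closedHalfSpace mapsTo_axisProj hw hwL hx]
  simp [axisProj_apply]

theorem contDiffOn_pd (hw : ContDiffOn ℝ 2 w (closedHalfSpace l)) (i : Fin d) :
    ContDiffOn ℝ 1 (pd d (closedHalfSpace l) w i) (closedHalfSpace l) :=
  (hw.fderivWithin uniqueDiffOn_closedHalfSpace (by norm_num)).clm_apply contDiffOn_const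

theorem mHess_eq_diagonal (hw : ContDiffOn ℝ 2 w (closedHalfSpace l))
    (hwL : EqOn w (w ∘ axisProj l) (closedHalfSpace l)) {x : E d}
    (hx : x ∈ closedHalfSpace l) :
    mHess d (closedHalfSpace l) w x = Matrix.diagonal (update
      (fun _ => -(Real.exp (-2 * w x) * pd d (closedHalfSpace l) w l x ^ 2 / 2)) l
      (Real.exp (-2 * w x) * (-pd d (closedHalfSpace l) (pd d (closedHalfSpace l) w l) l x
        + pd d (closedHalfSpace l) w l x ^ 2 / 2))) := by
  set S := closedHalfSpace l
  have hw1 : DifferentiableOn ℝ w S := hw.differentiableOn two_ne_zero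
  have h1 : ∀ i ≠ l, pd d S w i x = 0 := fun i hi =>
    pd_eq_zero_of_eqOn_comp_axisProj hw1 hwL hx hi
  have h2 : ∀ i ≠ l, pd d S (pd d S w l) i x = 0 := fun i hi =>
    pd_eq_zero_of_eqOn_comp_axisProj ((contDiffOn_pd hw l).differentiableOn one_ne_zero)
      (eqOn_pd_comp_axisProj hw1 hwL) hx hi
  have h3 : ∀ i, ∀ j ≠ l, pd d S (pd d S w j) i x = 0 := fun i j hj => by
    rw [pd, fderivWithin_congr (fun y hy => pd_eq_zero_of_eqOn_comp_axisProj hw1 hwL hy hj)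
      (pd_eq_zero_of_eqOn_comp_axisProj hw1 hwL hx hj)]
    simp
  have hsum : ∑ k, pd d S w k x ^ 2 = pd d S w l x ^ 2 :=
    Finset.sum_eq_single l (fun k _ hk => by simp [h1 k hk]) (by simp)
  ext i j
  simp only [mHess, Matrix.diagonal_apply, hsum]
  rcases eq_or_ne i j with rfl | hij
  · rcases eq_or_ne i l with rfl | hil
    · simp only [if_pos, update_self]; ring
    · simp only [h1 _ hil, h3 _ _ hil, if_pos, update_of_ne hil]; ring
  · rcases eq_or_ne j l with rfl | hjl
    · simp [hij, h1 _ hij, h2 _ hij]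
    · simp [hij, h1 _ hjl, h3 _ _ hjl]

theorem hasDerivWithinAt_pd_smul_single (hw : ContDiffOn ℝ 2 w (closedHalfSpace l)) {t : ℝ}
    (ht : 0 ≤ t) :
    HasDerivWithinAt (fun t : ℝ => pd d (closedHalfSpace l) w l (t • EuclideanSpace.single l 1))
      (pd d (closedHalfSpace l) (pd d (closedHalfSpace l) w l) l (t • EuclideanSpace.single l 1))
      (Ici 0) t := by
  have hray : MapsTo (fun t : ℝ => t • EuclideanSpace.single l (1 : ℝ)) (Ici 0)
      (closedHalfSpace l) := fun s hs => by simpa [closedHalfSpace] using hs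
  have hfd := ((contDiffOn_pd hw l).differentiableOn one_ne_zero _ (hray ht)).hasFDerivWithinAt
  have hline : HasDerivWithinAt (fun t : ℝ => t • EuclideanSpace.single l (1 : ℝ))
      (EuclideanSpace.single l 1) (Ici 0) t := by
    simpa using ((hasDerivAt_id t).smul_const (EuclideanSpace.single l (1 : ℝ))).hasDerivWithinAt
  exact hfd.comp_hasDerivWithinAt t hline hray

end HalfSpace

end CLL

theorem stmt16_general (n : ℕ) (c p : ℝ)
    (Γ : Set (Fin (n + 2) → ℝ)) (f : (Fin (n + 2) → ℝ) → ℝ)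
    (hC : CondC (n + 2) Γ)
    (hstar : lamStar (n + 2) ∉ closure Γ)
    (h : (fun i : Fin (n + 2) => if i = lastIdx n then (1 : ℝ) else 0) ∈ frontier Γ ∨ c ≤ 0)
    (v : E (n + 2) → ℝ) (hv : ContDiffOn ℝ 2 v (closure (upperH n)))
    (hdep : ∀ x ∈ closure (upperH n),
      v x = v (EuclideanSpace.single (lastIdx n) (x (lastIdx n))))
    (heq : ∀ x ∈ closure (upperH n), ∃ ev : Fin (n + 2) → ℝ,
      IsEigList (n + 2) (mHess (n + 2) (closure (upperH n)) v x) ev ∧ ev ∈ Γ ∧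
        f ev = Real.exp (-p * v x))
    (hbd : ∀ x ∈ closure (upperH n), x (lastIdx n) = 0 →
      pd (n + 2) (closure (upperH n)) v (lastIdx n) x = c * Real.exp (v x)) :
    False := by
  rw [closure_upperH] at hv hdep heq hbd
  set S := closedHalfSpace (lastIdx n)
  set u := pd (n + 2) S v (lastIdx n)
  set P := pd (n + 2) S u (lastIdx n)
  have hvL : EqOn v (v ∘ axisProj (lastIdx n)) S := fun x hx => by
    simp [hdep x hx, axisProj_apply]
  have hdiag : ∀ x ∈ S, update (fun _ => -(Real.exp (-2 * v x) * u x ^ 2 / 2)) (lastIdx n)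
      (Real.exp (-2 * v x) * (-P x + u x ^ 2 / 2)) ∈ Γ := fun x hx => by
    obtain ⟨ev, hev, hevΓ, -⟩ := heq x hx
    rw [mHess_eq_diagonal hv hvL hx] at hev
    exact hC.mem_of_isEigList_diagonal hev hevΓ
  have h0 : (0 : E (n + 2)) ∈ S := by simp [S, closedHalfSpace]
  rcases h with hfront | hc
  · have hsingle := hC.single_mem_of_update_mem (by positivity) (hdiag 0 h0)
    rw [← hC.2.2.1.interior_eq] at hsingle
    exact hfront.2 (by convert hsingle using 2 with i; exact (Pi.single_apply _ _ _).symm)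
  · obtain ⟨m, hm1, hm⟩ := hC.exists_one_lt_le_of_mem hstar
    have hray : ∀ t : ℝ, 0 ≤ t → t • EuclideanSpace.single (lastIdx n) (1 : ℝ) ∈ S :=
      fun t ht => by simpa [S, closedHalfSpace] using ht
    refine false_of_riccati_on_Ici (k := (m - 1) / 2) (by linarith)
      (fun t ht => hasDerivWithinAt_pd_smul_single hv ht) ?_
      (fun t ht => (hC.neg_and_le_of_update_mem hm1 hm (hdiag _ (hray t ht))).1)
      (fun t ht => (hC.neg_and_le_of_update_mem hm1 hm (hdiag _ (hray t ht))).2)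
    have hU0 : u 0 = c * Real.exp (v 0) := hbd 0 h0 rfl
    show u ((0 : ℝ) • EuclideanSpace.single (lastIdx n) 1) ≤ 0
    rw [zero_smul, hU0]
    exact mul_nonpos_of_nonpos_of_nonneg hc (Real.exp_pos (v 0)).le

/-- Remark 4.3 of the paper: nonexistence of one-variable solutions when either
`eₙ ∈ ∂Γ` or `c ≤ 0`. -/
theorem stmt16 (n : ℕ) (c p : ℝ) (hp : 0 ≤ p)
    (Γ : Set (Fin (n + 2) → ℝ)) (f : (Fin (n + 2) → ℝ) → ℝ)
    (hC : CondC (n + 2) Γ) (hF : CondF (n + 2) Γ f)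
    (hstar : lamStar (n + 2) ∉ closure Γ)
    (h : (fun i : Fin (n + 2) => if i = lastIdx n then (1 : ℝ) else 0) ∈ frontier Γ ∨ c ≤ 0)
    (v : E (n + 2) → ℝ) (hv : ContDiffOn ℝ 2 v (closure (upperH n)))
    (hdep : ∀ x ∈ closure (upperH n),
      v x = v (EuclideanSpace.single (lastIdx n) (x (lastIdx n))))
    (heq : ∀ x ∈ closure (upperH n), ∃ ev : Fin (n + 2) → ℝ,
      IsEigList (n + 2) (mHess (n + 2) (closure (upperH n)) v x) ev ∧ ev ∈ Γ ∧
        f ev = Real.exp (-p * v x))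
    (hbd : ∀ x ∈ closure (upperH n), x (lastIdx n) = 0 →
      pd (n + 2) (closure (upperH n)) v (lastIdx n) x = c * Real.exp (v x)) :
    False :=
  stmt16_general n c p Γ f hC hstar h v hv hdep heq hbd
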